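/- For every compact metric space X, the hyperconvexity deficiency is bounded by the radius: hcdef(X) ≤ rad(X). -/

import Mathlib

open CategoryTheory Metric ENNReal NNReal

noncomputable section

namespace GBP

/-! ### Singular homology with `ZMod 2` coefficients -/

/-- The singular chain complex with `ZMod 2` coefficients. -/
def schain : TopCat ⥤ ChainComplex (ModuleCat (ZMod 2)) ℕ :=
  TopCat.toSSet ⋙ ((SimplicialObject.whiskering _ _).obj (ModuleCat.free (ZMod 2))) ⋙
    AlgebraicTopology.alternatingFaceMapComplex _

/-- Degree-`k` singular homology with `ZMod 2` coefficients, as a functor. -/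
def sH (k : ℕ) : TopCat ⥤ ModuleCat (ZMod 2) :=
  schain ⋙ HomologicalComplex.homologyFunctor _ _ k

/-- The map on degree-`k` singular homology induced by an inclusion of subspaces. -/
def hIncl {Y : Type} [TopologicalSpace Y] (k : ℕ) {A B : Set Y} (h : A ⊆ B) :
    (sH k).obj (TopCat.of A) ⟶ (sH k).obj (TopCat.of B) :=
  (sH k).map (TopCat.ofHom (⟨Set.inclusion h, continuous_inclusion h⟩ : C(A, B)))

/-- The map on homology induced by the constant map to a one-point space. -/
def hPt {Z : TopCat} (k : ℕ) : (sH k).obj Z ⟶ (sH k).obj (TopCat.of PUnit) :=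
  (sH k).map (TopCat.ofHom (⟨fun _ => PUnit.unit, continuous_const⟩ : C(Z, PUnit)) :
    Z ⟶ TopCat.of PUnit)

/-- A singular homology class is *reduced* if it is killed by the map to a point; for a
nonempty space the reduced homology `H̃ₖ` is precisely the kernel of this map. -/
def Reduced {Z : TopCat} {k : ℕ} (ω : (sH k).obj Z) : Prop := hPt k ω = 0

/-- A subset of a topological space has trivial reduced `ZMod 2` homology in degree `k`. -/
def HTrivial {Y : Type} [TopologicalSpace Y] (k : ℕ) (T : Set Y) : Prop :=
  ∀ ω : (sH k).obj (TopCat.of T), Reduced ω → ω = 0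

/-- The relative filling radius `ρ(ω; A ⊂ Y)` of a degree-`k` homology class of `A ⊆ Y`:
the infimum of the `r > 0` such that `ω` dies in the open `r`-neighborhood of `A` in `Y`. -/
def fillRad {Y : Type} [NormedAddCommGroup Y] [NormedSpace ℝ Y] (k : ℕ) (A : Set Y)
    (ω : (sH k).obj (TopCat.of A)) : ℝ :=
  sInf { r : ℝ | ∃ hr : 0 < r, hIncl k (self_subset_thickening hr A) ω = 0 }

/-! ### Finite simplicial complexes and widths -/

/-- An abstract finite simplicial complex on the vertex set `Fin n`. -/
structure FinComplex where
  n : ℕ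
  faces : Finset (Finset (Fin n))
  down_closed : ∀ s ∈ faces, ∀ t ⊆ s, t ∈ faces

/-- A finite simplicial complex has dimension at most `k`. -/
def FinComplex.DimLE (K : FinComplex) (k : ℕ) : Prop := ∀ s ∈ K.faces, s.card ≤ k + 1

/-- The geometric realization of a finite simplicial complex, as a subset of `Fin n → ℝ`:
convex weights whose support is contained in a face. -/
def FinComplex.space (K : FinComplex) : Set (Fin K.n → ℝ) :=
  { w | (∀ i, 0 ≤ w i) ∧ (∑ i, w i) = 1 ∧ ∃ s ∈ K.faces, ∀ i, w i ≠ 0 → i ∈ s }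

/-- The Urysohn `k`-width of a compact metric space `X`: the infimum over continuous maps
`f` from `X` to finite simplicial complexes of dimension at most `k` of the supremal
diameter of a fiber of `f`. -/
def UW (X : Type) [MetricSpace X] (k : ℕ) : ℝ :=
  sInf { d : ℝ | ∃ K : FinComplex, K.DimLE k ∧ ∃ f : C(X, K.space),
    d = ⨆ p : K.space, Metric.diam (f ⁻¹' {p}) }

/-- `T` is (homeomorphic to) a finite simplicial complex of dimension at most `k`. -/
def IsComplexOfDimLE {Y : Type} [TopologicalSpace Y] (k : ℕ) (T : Set Y) : Prop :=
  ∃ K : FinComplex, K.DimLE k ∧ Nonempty (↥K.space ≃ₜ ↥T)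

/-- `T` is (homeomorphic to) a finite simplicial complex. -/
def IsComplex {Y : Type} [TopologicalSpace Y] (T : Set Y) : Prop :=
  ∃ K : FinComplex, Nonempty (↥K.space ≃ₜ ↥T)

/-- The Alexandrov `k`-width of `A` relative to the ambient normed space `Y`: the infimum
over continuous maps `f : A → Y` whose image is a finite simplicial complex of dimension
at most `k` of `sup_{x ∈ A} ‖x - f x‖`. -/
def AW {Y : Type} [NormedAddCommGroup Y] [NormedSpace ℝ Y] (k : ℕ) (A : Set Y) : ℝ :=
  sInf { d : ℝ | ∃ f : C(↥A, Y), IsComplexOfDimLE k (Set.range f) ∧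
    d = ⨆ x : ↥A, ‖(x : Y) - f x‖ }

/-- The `k`-th treewidth of `A` relative to the ambient normed space `Y`: as the Alexandrov
width, but where the target complex moreover has trivial `k`-th reduced homology. -/
def TW {Y : Type} [NormedAddCommGroup Y] [NormedSpace ℝ Y] (k : ℕ) (A : Set Y) : ℝ :=
  sInf { d : ℝ | ∃ f : C(↥A, Y), IsComplexOfDimLE k (Set.range f) ∧
    HTrivial k (Set.range f) ∧ d = ⨆ x : ↥A, ‖(x : Y) - f x‖ }

/-- The Kolmogorov `k`-width of `A` relative to the ambient normed space `Y`. -/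
def KW {Y : Type} [NormedAddCommGroup Y] [NormedSpace ℝ Y] (k : ℕ) (A : Set Y) : ℝ :=
  sInf { r : ℝ | 0 < r ∧ ∃ P : AffineSubspace ℝ Y, (P : Set Y).Nonempty ∧
    Module.finrank ℝ P.direction = k ∧ A ⊆ thickening r (P : Set Y) }

/-- The `(k+1)`-st `∞`-variance of `A` in `Y` (the `ℓ^∞` principal component analysis):
the infimum over affine `k`-dimensional subspaces `P ⊆ Y` of `sup_{x ∈ A} dist (x, P)`. -/
def nuVar {Y : Type} [NormedAddCommGroup Y] [NormedSpace ℝ Y] (k : ℕ) (A : Set Y) : ℝ :=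
  sInf { d : ℝ | ∃ P : AffineSubspace ℝ Y, (P : Set Y).Nonempty ∧
    Module.finrank ℝ P.direction = k ∧ d = ⨆ x : ↥A, infDist (x : Y) (P : Set Y) }

/-- The circumradius of `A` in `Y`. -/
def circumrad {Y : Type} [NormedAddCommGroup Y] (A : Set Y) : ℝ :=
  ⨅ y : Y, ⨆ x : ↥A, ‖(x : Y) - y‖

/-- A map `f : Y → Y` is a `C`-robust: for any finite `A ⊆ Y` and `x` in its convex hull,
`‖f x - x‖ ≤ max_{a ∈ A} ‖f a - a‖ + C ⬝ rad (A ⊂ Y)`. -/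
def IsRobust {Y : Type} [NormedAddCommGroup Y] [NormedSpace ℝ Y] (C : ℝ) (f : Y → Y) :
    Prop :=
  ∀ A : Set Y, A.Finite → ∀ x ∈ convexHull ℝ A,
    ‖f x - x‖ ≤ (⨆ a : ↥A, ‖f a - (a : Y)‖) + C * circumrad A

/-- The `C`-robust `k`-dimensional treewidth of `A` relative to `Y`: the infimum of the
`δ ≥ 0` such that some `C`-robust retraction of `Y` onto a finite simplicial complex of
dimension at most `k` displaces every point of `A` by at most `δ`. -/
def TWrobust {Y : Type} [NormedAddCommGroup Y] [NormedSpace ℝ Y] (C : ℝ) (k : ℕ)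
    (A : Set Y) : ℝ :=
  sInf { δ : ℝ | 0 ≤ δ ∧ ∃ (T : Set Y) (f : C(Y, Y)), IsComplexOfDimLE k T ∧
    (∀ y : Y, f y ∈ T) ∧ (∀ t ∈ T, f t = t) ∧ IsRobust C f ∧ ∀ x ∈ A, ‖f x - x‖ ≤ δ }

/-! ### The Čech (neighborhood) filtration -/

variable {Y : Type} [NormedAddCommGroup Y] [NormedSpace ℝ Y]

/-- The birth time of a degree-`k` class of the Čech (neighborhood) filtration of `X ⊆ Y`
present at time `s`: the infimum of the `0 < r ≤ s` at which `ω` has a nonzero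
predecessor. -/
def cechBirth (k : ℕ) (X : Set Y) (s : ℝ)
    (ω : (sH k).obj (TopCat.of (thickening s X))) : ℝ :=
  sInf { r : ℝ | 0 < r ∧ ∃ hrs : r ≤ s, ∃ ωr : (sH k).obj (TopCat.of (thickening r X)),
    ωr ≠ 0 ∧ hIncl k (thickening_mono hrs X) ωr = ω }

/-- The death time of a degree-`k` class of the Čech (neighborhood) filtration of `X ⊆ Y`
present at time `s`: the supremum of the `t ≥ s` where the image of `ω` is nonzero. -/
def cechDeath (k : ℕ) (X : Set Y) (s : ℝ)
    (ω : (sH k).obj (TopCat.of (thickening s X))) : ℝ :=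
  sSup { t : ℝ | ∃ hst : s ≤ t, hIncl k (thickening_mono hst X) ω ≠ 0 }

/-- The Čech extinction time of `X ⊆ Y`: the supremum of the death times of all nonzero
reduced classes appearing in the Čech (neighborhood) filtration of `X` in `Y`, over all
degrees `k ≥ 0`. -/
def cechExtinction (X : Set Y) : ℝ :=
  sSup { d : ℝ | ∃ (k : ℕ) (s : ℝ) (_ : 0 < s)
    (ω : (sH k).obj (TopCat.of (thickening s X))),
    ω ≠ 0 ∧ Reduced ω ∧ d = cechDeath k X s ω }

/-- The convexity deficiency of `X` in `Y`: the Hausdorff distance from `X` to its convex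
hull. -/
def cdef (X : Set Y) : ℝ := hausdorffDist X (convexHull ℝ X)

/-- `T ⊆ Y` is `δ`-übercontractible if its open `r`-neighborhood is contractible for every
`r ≥ δ`. -/
def Ubercontractible (δ : ℝ) (T : Set Y) : Prop :=
  ∀ r : ℝ, δ ≤ r → ContractibleSpace ↥(thickening r T)

/-- The überspread of `X ⊆ Y`: the infimum of the `δ ≥ 0` such that some
`δ`-übercontractible simplicial complex `T ⊆ Y` is within Hausdorff distance `δ` of `X`. -/
def uberspread (X : Set Y) : ℝ :=
  sInf { δ : ℝ | 0 ≤ δ ∧ ∃ T : Set Y, IsComplex T ∧ Ubercontractible δ T ∧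
    hausdorffDist X T ≤ δ }

/-! ### The Vietoris–Rips filtration -/

/-- The Vietoris–Rips simplicial set of a metric space at scale `r`: its `n`-simplices are
the `(n+1)`-tuples of points of `X` with pairwise distances `< r`. -/
def VRsset (X : Type) [MetricSpace X] (r : ℝ) : SSet where
  obj n := { f : Fin (n.unop.len + 1) → X // ∀ i j, dist (f i) (f j) < r }
  map φ := TypeCat.ofHom fun f => ⟨f.1 ∘ φ.unop.toOrderHom, fun i j => f.2 _ _⟩
  map_id := by intros; rfl
  map_comp := by intros; rfl

/-- The inclusion of Vietoris–Rips simplicial sets for `r ≤ r'`. -/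
def VRmap (X : Type) [MetricSpace X] {r r' : ℝ} (h : r ≤ r') :
    VRsset X r ⟶ VRsset X r' where
  app n := TypeCat.ofHom fun f => ⟨f.1, fun i j => lt_of_lt_of_le (f.2 i j) h⟩
  naturality := by intros; rfl

/-- The one-point simplicial set. -/
def ptSset : SSet where
  obj _ := PUnit
  map _ := TypeCat.ofHom fun _ => PUnit.unit
  map_id := by intros; rfl
  map_comp := by intros; rfl

/-- The map from the Vietoris–Rips simplicial set to the point. -/
def VRtoPt (X : Type) [MetricSpace X] (r : ℝ) : VRsset X r ⟶ ptSset where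
  app _ := TypeCat.ofHom fun _ => PUnit.unit
  naturality := by intros; rfl

/-- The simplicial `ZMod 2` chain complex of a simplicial set. -/
def ssetChain (S : SSet) : ChainComplex (ModuleCat (ZMod 2)) ℕ :=
  (AlgebraicTopology.alternatingFaceMapComplex _).obj
    (((SimplicialObject.whiskering _ _).obj (ModuleCat.free (ZMod 2))).obj S)

/-- The chain map induced by a map of simplicial sets. -/
def ssetChainMap {S T : SSet} (f : S ⟶ T) : ssetChain S ⟶ ssetChain T :=
  (AlgebraicTopology.alternatingFaceMapComplex _).map
    (((SimplicialObject.whiskering _ _).obj (ModuleCat.free (ZMod 2))).map f)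

/-- Degree-`k` simplicial homology of a simplicial set with `ZMod 2` coefficients. -/
def ssetH (k : ℕ) (S : SSet) : ModuleCat (ZMod 2) := (ssetChain S).homology k

/-- The map on simplicial homology induced by a map of simplicial sets. -/
def ssetHmap (k : ℕ) {S T : SSet} (f : S ⟶ T) : ssetH k S ⟶ ssetH k T :=
  HomologicalComplex.homologyMap (ssetChainMap f) k

/-- Degree-`k` homology of the Vietoris–Rips complex of `X` at scale `r`, with `ZMod 2`
coefficients. -/
def vrH (X : Type) [MetricSpace X] (k : ℕ) (r : ℝ) : ModuleCat (ZMod 2) :=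
  ssetH k (VRsset X r)

/-- The structure map of the Vietoris–Rips persistent homology. -/
def vrMap (X : Type) [MetricSpace X] (k : ℕ) {r r' : ℝ} (h : r ≤ r') :
    vrH X k r ⟶ vrH X k r' :=
  ssetHmap k (VRmap X h)

/-- A Vietoris–Rips homology class is *reduced* if it is killed by the map to a point. -/
def vrReduced {X : Type} [MetricSpace X] {k : ℕ} {r : ℝ} (ω : vrH X k r) : Prop :=
  ssetHmap k (VRtoPt X r) ω = 0

/-- The birth time of a degree-`k` Vietoris–Rips class present at scale `s`. -/
def vrBirth (X : Type) [MetricSpace X] (k : ℕ) (s : ℝ) (ω : vrH X k s) : ℝ :=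
  sInf { r : ℝ | 0 < r ∧ ∃ hrs : r ≤ s, ∃ ωr : vrH X k r, ωr ≠ 0 ∧ vrMap X k hrs ωr = ω }

/-- The death time of a degree-`k` Vietoris–Rips class present at scale `s`. -/
def vrDeath (X : Type) [MetricSpace X] (k : ℕ) (s : ℝ) (ω : vrH X k s) : ℝ :=
  sSup { t : ℝ | ∃ hst : s ≤ t, vrMap X k hst ω ≠ 0 }

/-- The Vietoris–Rips extinction time of a compact metric space: the supremum of the death
times of all nonzero reduced classes appearing in the Vietoris–Rips filtration, over all
degrees `k ≥ 0`. -/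
def vrExtinction (X : Type) [MetricSpace X] : ℝ :=
  sSup { d : ℝ | ∃ (k : ℕ) (s : ℝ) (_ : 0 < s) (ω : vrH X k s),
    ω ≠ 0 ∧ vrReduced ω ∧ d = vrDeath X k s ω }

/-! ### `L^∞(X)`, the Kuratowski embedding, and the tight span -/

/-- `L^∞(X)`: the Banach space of bounded real-valued functions on `X`, with the sup
norm. -/
abbrev Linf (X : Type) : Type := ↥(lp (fun _ : X => ℝ) ∞)

/-- The Kuratowski embedding `x ↦ dist x ·` of a compact metric space into `L^∞(X)`. -/
def kur (X : Type) [MetricSpace X] [CompactSpace X] (x : X) : Linf X :=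
  ⟨fun y => dist x y, memℓp_infty ⟨Metric.diam (Set.univ : Set X), by
    rintro - ⟨y, rfl⟩
    simpa [Real.norm_eq_abs, abs_of_nonneg dist_nonneg] using
      Metric.dist_le_diam_of_mem isCompact_univ.isBounded (Set.mem_univ x) (Set.mem_univ y)⟩⟩

lemma kur_lipschitz (X : Type) [MetricSpace X] [CompactSpace X] :
    LipschitzWith 1 (kur X) := by
  apply LipschitzWith.of_dist_le_mul
  intro x x'
  rw [NNReal.coe_one, one_mul, dist_eq_norm]
  refine lp.norm_le_of_forall_le dist_nonneg fun y => ?_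
  have : (kur X x - kur X x') y = dist x y - dist x' y := by
    simp [kur, lp.coeFn_sub]
    rfl
  rw [this, Real.norm_eq_abs]
  exact abs_dist_sub_le x x' y

lemma kur_continuous (X : Type) [MetricSpace X] [CompactSpace X] :
    Continuous (kur X) := (kur_lipschitz X).continuous

/-- The pushforward on degree-`k` homology along the Kuratowski embedding, viewed as a map
onto its image in `L^∞(X)`. -/
def kurPush (X : Type) [MetricSpace X] [CompactSpace X] (k : ℕ) :
    (sH k).obj (TopCat.of X) ⟶ (sH k).obj (TopCat.of (Set.range (kur X))) :=
  (sH k).map (TopCat.ofHom (⟨fun x => ⟨kur X x, Set.mem_range_self x⟩,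
    (kur_continuous X).subtype_mk _⟩ : C(X, ↥(Set.range (kur X)))))

/-- The (absolute) filling radius of a degree-`k` homology class of a compact metric space:
the relative filling radius of its pushforward under the Kuratowski embedding
`X ↪ L^∞(X)`. -/
def absFillRad (X : Type) [MetricSpace X] [CompactSpace X] (k : ℕ)
    (ω : (sH k).obj (TopCat.of X)) : ℝ :=
  fillRad k (Set.range (kur X)) (kurPush X k ω)

/-- The set `Δ(X)` of functions satisfying the triangle-type inequality. -/
def DeltaSet (X : Type) [MetricSpace X] : Set (Linf X) :=
  { f | ∀ x x' : X, dist x x' ≤ f x + f x' }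

/-- The tight span (injective hull) of a compact metric space `X`, realized inside
`L^∞(X)` as the set of pointwise-minimal elements of `Δ(X)`. -/
def tightSpan (X : Type) [MetricSpace X] : Set (Linf X) :=
  { f | f ∈ DeltaSet X ∧ ∀ g ∈ DeltaSet X, (∀ x, g x ≤ f x) → g = f }

/-- The hyperconvexity deficiency of a compact metric space: the Hausdorff distance
between (the Kuratowski image of) `X` and its tight span. -/
def hcdef (X : Type) [MetricSpace X] [CompactSpace X] : ℝ :=
  hausdorffDist (Set.range (kur X)) (tightSpan X)

/-- The radius of a compact metric space. -/
def radius (X : Type) [MetricSpace X] : ℝ := ⨅ y : X, ⨆ x : X, dist x y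

end GBP

open GBP

section Aux

variable {X : Type} [MetricSpace X] [CompactSpace X]

lemma aux_bdd (y : X) : BddAbove (Set.range fun x : X => dist x y) :=
  ⟨Metric.diam (Set.univ : Set X), by
    rintro - ⟨x, rfl⟩
    exact Metric.dist_le_diam_of_mem isCompact_univ.isBounded (Set.mem_univ x)
      (Set.mem_univ y)⟩

lemma aux_sup_nonneg (y : X) : 0 ≤ ⨆ x : X, dist x y := by
  have := le_ciSup (aux_bdd y) y
  simpa using this

lemma aux_delta_nonneg {f : Linf X} (hf : f ∈ DeltaSet X) (x : X) : 0 ≤ f x := by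
  have := hf x x
  simp only [dist_self] at this
  linarith

lemma aux_kur_apply (x z : X) : (kur X x : ∀ _ : X, ℝ) z = dist x z := rfl

lemma aux_kur_mem_tightSpan (x : X) : kur X x ∈ tightSpan X := by
  refine ⟨fun a b => ?_, fun g hg hle => ?_⟩
  · rw [aux_kur_apply, aux_kur_apply]
    exact dist_triangle_left a b x
  · have hgx : g x = 0 := by
      have h1 := hle x
      rw [aux_kur_apply, dist_self] at h1
      exact le_antisymm h1 (aux_delta_nonneg hg x)
    apply Subtype.ext
    funext z
    have h1 : dist x z ≤ g x + g z := hg x z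
    rw [hgx, zero_add] at h1
    have h2 : g z ≤ dist x z := by
      have := hle z
      rwa [aux_kur_apply] at this
    show g z = (kur X x : ∀ _ : X, ℝ) z
    rw [aux_kur_apply]
    linarith

lemma aux_tight_le {f : Linf X} (hf : f ∈ tightSpan X) (y : X) :
    f y ≤ ⨆ x : X, dist x y := by
  classical
  by_contra hcon
  push_neg at hcon
  set M : ℝ := ⨆ x : X, dist x y with hM
  have hM0 : 0 ≤ M := aux_sup_nonneg y
  have hmem : Memℓp (fun z : X => if z = y then M else f z) ∞ := by
    apply memℓp_infty
    refine ⟨max |M| ‖f‖, ?_⟩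
    rintro - ⟨z, rfl⟩
    by_cases hz : z = y
    · simp only [hz, if_pos rfl, Real.norm_eq_abs]
      exact le_max_left _ _
    · simp only [if_neg hz]
      exact le_max_of_le_right (lp.norm_apply_le_norm (by norm_num) f z)
  set g : Linf X := ⟨fun z : X => if z = y then M else f z, hmem⟩ with hgdef
  have hgz : ∀ z, (g : ∀ _ : X, ℝ) z = if z = y then M else f z := fun z => rfl
  have hdistM : ∀ z : X, dist z y ≤ M := fun z => le_ciSup (aux_bdd y) z
  have hgΔ : g ∈ DeltaSet X := by
    intro a b
    rw [hgz, hgz]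
    by_cases ha : a = y <;> by_cases hb : b = y
    · rw [if_pos ha, if_pos hb, ha, hb, dist_self]; linarith
    · rw [if_pos ha, if_neg hb, ha]
      have h1 : dist y b ≤ M := by rw [dist_comm]; exact hdistM b
      have h2 : 0 ≤ f b := aux_delta_nonneg hf.1 b
      linarith
    · rw [if_neg ha, if_pos hb, hb]
      have h1 : dist a y ≤ M := hdistM a
      have h2 : 0 ≤ f a := aux_delta_nonneg hf.1 a
      linarith
    · rw [if_neg ha, if_neg hb]
      exact hf.1 a b
  have hle : ∀ z, g z ≤ f z := by
    intro z
    rw [hgz]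
    by_cases hz : z = y
    · subst hz; rw [if_pos rfl]; linarith
    · rw [if_neg hz]
  have heq : g = f := hf.2 g hgΔ hle
  have : (g : ∀ _ : X, ℝ) y = f y := by rw [heq]
  rw [hgz, if_pos rfl] at this
  linarith

lemma aux_tight_dist [Nonempty X] {f : Linf X} (hf : f ∈ tightSpan X) (y : X) :
    dist f (kur X y) ≤ ⨆ x : X, dist x y := by
  set M : ℝ := ⨆ x : X, dist x y with hM
  have hM0 : 0 ≤ M := aux_sup_nonneg y
  rw [dist_eq_norm]
  refine lp.norm_le_of_forall_le hM0 fun z => ?_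
  have hsub : (f - kur X y) z = f z - dist y z := by
    rw [lp.coeFn_sub, Pi.sub_apply, aux_kur_apply]
  rw [hsub, Real.norm_eq_abs, abs_le]
  have hdyz : dist y z ≤ M := by
    rw [dist_comm]; exact le_ciSup (aux_bdd y) z
  constructor
  · have h2 : 0 ≤ f z := aux_delta_nonneg hf.1 z
    linarith
  · have h3 : f z ≤ ⨆ x : X, dist x z := aux_tight_le hf z
    have h4 : (⨆ x : X, dist x z) ≤ dist y z + M := by
      refine ciSup_le fun w => ?_
      have := dist_triangle w y z
      have hw : dist w y ≤ M := le_ciSup (aux_bdd y) w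
      linarith
    linarith

end Aux

/-- For every compact metric space `X`, the hyperconvexity deficiency of
`X` is at most the radius of `X`. -/
theorem hcdef_le_radius (X : Type) [MetricSpace X] [CompactSpace X] :
    hcdef X ≤ radius X := by
  rcases isEmpty_or_nonempty X with h | h
  · rw [hcdef, Set.range_eq_empty, Metric.hausdorffDist_empty', radius,
      Real.iInf_of_isEmpty]
  · have hrad0 : 0 ≤ radius X := Real.iInf_nonneg fun y => aux_sup_nonneg y
    rw [hcdef]
    apply hausdorffDist_le_of_infDist hrad0
    · rintro - ⟨x, rfl⟩
      rw [infDist_zero_of_mem (aux_kur_mem_tightSpan x)]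
      exact hrad0
    · intro f hf
      rw [radius]
      refine le_ciInf fun y => ?_
      exact (infDist_le_dist_of_mem (Set.mem_range_self y)).trans
        (aux_tight_dist hf y)

end
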